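/- arXiv:1403.1884 — 3 statements merged into one kernel-verified Lean document; each statement's English description precedes it below -/
import Mathlib

section
/- Kummer's transformation: for a, b ∈ ℂ with b not a nonpositive integer, the identity ₁F₁(a; b; −z) = e^{−z} · ₁F₁(b−a; b; z) holds as an identity of formal (or entire) power series in z. -/
open PowerSeries

/-- Pochhammer symbol `(a)_k = a (a+1) ⋯ (a+k−1)` in `ℂ`. -/
noncomputable def poch (a : ℂ) (k : ℕ) : ℂ := (ascPochhammer ℂ k).eval a

/-- Kummer confluent hypergeometric series `₁F₁(a;b;sz)` as a formal power series in `z`. -/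
noncomputable def F1 (a b s : ℂ) : PowerSeries ℂ :=
  PowerSeries.mk fun k => poch a k / poch b k * s ^ k / (k.factorial : ℂ)

/-- Formal derivative of a power series. -/
noncomputable def D (f : PowerSeries ℂ) : PowerSeries ℂ := f.derivativeFun

/-- The exponential series `e^{tz}` as a formal power series in `z`. -/
noncomputable def Exp (t : ℂ) : PowerSeries ℂ :=
  PowerSeries.mk fun k => t ^ k / (k.factorial : ℂ)

/-!
Comparing coefficients of `z ^ n` and clearing denominators with `(b)_n = (b)_j (b + j)_i` and
`n! = C(n, j) j! i!` (for `j + i = n`), the identity becomes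
`(-1)^n (a)_n = ∑ C(n, j) (b - a)_j (-1)^i (b + j)_i`.
Writing `[x]_k` for the falling factorial, this is Chu–Vandermonde
`[x + y]_n = ∑ C(n, j) [x]_j [y]_i` at `x = a - b`, `y = b + n - 1`, since
`[a + n - 1]_n = (a)_n`, `[a - b]_j = (-1)^j (b - a)_j` and `[b + n - 1]_i = (b + j)_i`.
-/

open Finset

namespace Polynomial

theorem descPochhammer_smeval_eq_eval {R : Type*} [Ring R] (r : R) (n : ℕ) :
    (descPochhammer ℤ n).smeval r = (descPochhammer R n).eval r := by
  rw [descPochhammer_smeval_eq_ascPochhammer, ascPochhammer_smeval_eq_eval,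
    descPochhammer_eval_eq_ascPochhammer]

theorem neg_one_pow_mul_ascPochhammer_eval_eq_sum {R : Type*} [CommRing R] (a b : R) (n : ℕ) :
    (-1) ^ n * (ascPochhammer R n).eval a =
      ∑ ji ∈ antidiagonal n, (n.choose ji.1 : R) * (ascPochhammer R ji.1).eval (b - a) *
        ((-1) ^ ji.2 * (ascPochhammer R ji.2).eval (b + ji.1)) := by
  have h := Ring.descPochhammer_smeval_add n (Commute.all (a - b) (b + n - 1))
  simp only [descPochhammer_smeval_eq_eval] at h
  rw [descPochhammer_eval_eq_ascPochhammer, show a - b + (b + n - 1) - n + 1 = a by ring] at h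
  rw [h, mul_sum]
  refine sum_congr rfl fun ⟨j, i⟩ hji => ?_
  obtain rfl : j + i = n := HasAntidiagonal.mem_antidiagonal.1 hji
  rw [← neg_sub a b, ascPochhammer_eval_neg_eq_descPochhammer,
    descPochhammer_eval_eq_ascPochhammer R (b + _ - 1), Nat.cast_add,
    show b + (j + i) - 1 - i + 1 = b + j by ring, pow_add]
  ring

end Polynomial

lemma poch_ne_zero {b : ℂ} (hb : ∀ k : ℕ, b + k ≠ 0) (n : ℕ) : poch b n ≠ 0 := by
  intro h
  obtain ⟨k, -, hk⟩ := (ascPochhammer_eval_eq_zero_iff n b).1 h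
  exact hb k (by rw [hk]; ring)

lemma poch_add (x : ℂ) (m k : ℕ) : poch x (m + k) = poch x m * poch (x + m) k := by
  rw [poch, ← ascPochhammer_mul, Polynomial.eval_mul, Polynomial.eval_comp]
  simp [poch]

/-- Kummer's transformation `₁F₁(a;b;−z) = e^{−z} ₁F₁(b−a;b;z)`. -/
theorem stmt_6 (a b : ℂ) (hb : ∀ k : ℕ, b + k ≠ 0) :
    F1 a b (-1) = Exp (-1) * F1 (b - a) b 1 := by
  ext n
  rw [mul_comm, coeff_mul, F1, coeff_mk, div_mul_eq_mul_div, mul_comm (poch a n), div_div,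
    poch, Polynomial.neg_one_pow_mul_ascPochhammer_eval_eq_sum a b, sum_div]
  simp only [← poch.eq_1]
  refine sum_congr rfl fun ⟨j, i⟩ hji => ?_
  obtain rfl : j + i = n := HasAntidiagonal.mem_antidiagonal.1 hji
  have hfact : ((j + i).choose j * j.factorial * i.factorial : ℂ) = (j + i).factorial := by
    exact_mod_cast Nat.choose_symm_add ▸ Nat.add_choose_mul_factorial_mul_factorial j i
  have hchoose : ((j + i).choose j : ℂ) ≠ 0 := by
    exact_mod_cast (Nat.choose_pos (Nat.le_add_right j i)).ne'
  have hpoch := poch_ne_zero hb (j + i)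
  rw [poch_add] at hpoch ⊢
  simp only [F1, Exp, coeff_mk, one_pow, mul_one, ← hfact]
  field_simp [mul_ne_zero_iff.1 hpoch]
end

section
/- Let α, γ, δ, ε ∈ ℂ with ε ≠ 0 and suppose α/ε = −N for a nonnegative integer N, with γ not a nonpositive integer. Define a_n by the recurrence R_n a_n + Q_{n−1}a_{n−1} + P_{n−2}a_{n−2} = 0, a_0 = 1, where R_n = −n(γ+n−1), Q_n = n(γ+n−1) − q, P_n = −δ(α+εn)/(γ+n). Then P_N = 0, and the condition a_{N+1} = 0 is a polynomial equation of degree N+1 in the accessory parameter q. -/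
open PowerSeries

/-! The recurrence solves for `a_{n+2}` as `((q - b_{n+1}) a_{n+1} - P_n a_n) / R_{n+2}`, so by
two-step induction `a_n` is the value at `q` of a polynomial of degree exactly `n`: only the
factor `q - b_{n+1}` raises the degree, and the leading coefficient is never lost because
`R_{n+1} = -(n+1)(γ+n) ≠ 0`. The vanishing `P_N = 0` is the identity `α + εN = 0`. -/

namespace Polynomial

variable {K : Type*} [Field K] (r b c : ℕ → K)

/-- The polynomial solution in `q` of `r n a_{n+1} + (b n - q) a_n + c (n-1) a_{n-1} = 0`,
`a_0 = 1`. -/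
noncomputable def recurrencePoly : ℕ → K[X]
  | 0 => 1
  | 1 => C (r 0)⁻¹ * (X - C (b 0))
  | n + 2 => C (r (n + 1))⁻¹ *
      ((X - C (b (n + 1))) * recurrencePoly (n + 1) - C (c n) * recurrencePoly n)

variable {r}

theorem degree_recurrencePoly (hr : ∀ n, r n ≠ 0) (n : ℕ) :
    (recurrencePoly r b c n).degree = n := by
  induction n using Nat.twoStepInduction with
  | zero => simp [recurrencePoly]
  | one => simp [recurrencePoly, degree_C_mul (inv_ne_zero (hr 0))]
  | more n ih₀ ih₁ =>
    have hlead : ((X - C (b (n + 1))) * recurrencePoly r b c (n + 1)).degree = ↑(n + 2) := by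
      rw [degree_mul, degree_X_sub_C, ih₁]
      norm_cast
      omega
    have hlow : (C (c n) * recurrencePoly r b c n).degree < ↑(n + 2) :=
      calc (C (c n) * recurrencePoly r b c n).degree ≤ 0 + ↑n :=
            (degree_mul_le _ _).trans (add_le_add degree_C_le ih₀.le)
        _ < ↑(n + 2) := by norm_cast; omega
    rw [recurrencePoly, degree_C_mul (inv_ne_zero (hr _)),
      degree_sub_eq_left_of_degree_lt (hlead ▸ hlow), hlead]

theorem eval_recurrencePoly (hr : ∀ n, r n ≠ 0) (a : K → ℕ → K) (h0 : ∀ q, a q 0 = 1)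
    (h1 : ∀ q, r 0 * a q 1 + (b 0 - q) * a q 0 = 0)
    (hrec : ∀ q n, r (n + 1) * a q (n + 2) + (b (n + 1) - q) * a q (n + 1) + c n * a q n = 0)
    (q : K) (n : ℕ) : (recurrencePoly r b c n).eval q = a q n := by
  induction n using Nat.twoStepInduction with
  | zero => simp [recurrencePoly, h0]
  | one =>
    simp only [recurrencePoly, eval_mul, eval_C, eval_sub, eval_X]
    rw [inv_mul_eq_iff_eq_mul₀ (hr 0)]
    linear_combination (h0 q) * (b 0 - q) - h1 q
  | more n ih₀ ih₁ =>
    simp only [recurrencePoly, eval_mul, eval_C, eval_sub, eval_X, ih₀, ih₁]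
    rw [inv_mul_eq_iff_eq_mul₀ (hr _)]
    linear_combination -hrec q n

end Polynomial

open Polynomial

theorem stmt_9 (α γ δ ε : ℂ) (hε : ε ≠ 0) (N : ℕ) (hα : α / ε = -(N : ℂ))
    (hγ : ∀ k : ℕ, γ + k ≠ 0)
    (R : ℕ → ℂ) (Q : ℂ → ℕ → ℂ) (P : ℕ → ℂ)
    (hR : ∀ n : ℕ, R n = -(n : ℂ) * (γ + n - 1))
    (hQ : ∀ q : ℂ, ∀ n : ℕ, Q q n = (n : ℂ) * (γ + n - 1) - q)
    (hP : ∀ n : ℕ, P n = -δ * (α + ε * n) / (γ + n))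
    (a : ℂ → ℕ → ℂ) (ha0 : ∀ q : ℂ, a q 0 = 1)
    (hrec1 : ∀ q : ℂ, R 1 * a q 1 + Q q 0 * a q 0 = 0)
    (hrec : ∀ q : ℂ, ∀ n : ℕ,
      R (n + 2) * a q (n + 2) + Q q (n + 1) * a q (n + 1) + P n * a q n = 0) :
    P N = 0 ∧
      ∃ p : Polynomial ℂ, p.degree = (N + 1 : ℕ) ∧ ∀ q : ℂ, p.eval q = a q (N + 1) := by
  have hPN : P N = 0 := by
    rw [hP, (div_eq_iff hε).mp hα]
    ring
  have hR_ne : ∀ n : ℕ, R (n + 1) ≠ 0 := fun n => by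
    rw [hR, show -((n + 1 : ℕ) : ℂ) * (γ + (n + 1 : ℕ) - 1) = -((n + 1) * (γ + n)) by
      push_cast; ring]
    exact neg_ne_zero.mpr (mul_ne_zero (Nat.cast_add_one_ne_zero n) (hγ n))
  set b : ℕ → ℂ := fun n => (n : ℂ) * (γ + n - 1)
  have hQb : ∀ q n, Q q n = b n - q := hQ
  refine ⟨hPN, recurrencePoly (fun n => R (n + 1)) b P (N + 1),
    degree_recurrencePoly b P hR_ne _, fun q => eval_recurrencePoly b P hR_ne a ha0 ?_ ?_ q _⟩
  · simpa [hQb] using hrec1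
  · simpa [hQb] using hrec
end

section
/- Let α, γ, δ, q, ε ∈ ℂ with ε ≠ 0 and α/ε = −N for a nonnegative integer N, γ not a nonpositive integer. Suppose the coefficients a_0, …, a_N (with a_0 = 1) satisfy the recurrence R_n a_n + Q_{n−1}a_{n−1} + P_{n−2}a_{n−2} = 0 for 1 ≤ n ≤ N and additionally Q_N a_N + P_{N−1}a_{N−1} = 0, where R_n = −n(γ+n−1), Q_n = n(γ+n−1) − q, P_n = −δ(α+εn)/(γ+n). Then u(z) = Σ_{n=0}^{N} a_n · ₁F₁(−N+n; γ+n; −εz) is a polynomial in z of degree at most N and satisfies z²u'' + (εz² + γz + δ)u' + (αz − q)u = 0. -/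
open PowerSeries

/-- The double-confluent Heun operator multiplied by `z²`. -/
noncomputable def L (α γ δ q ε : ℂ) (f : PowerSeries ℂ) : PowerSeries ℂ :=
  (X : PowerSeries ℂ) ^ 2 * D (D f)
    + (PowerSeries.C ε * X ^ 2 + PowerSeries.C γ * X + PowerSeries.C δ) * D f
    + (PowerSeries.C α * X - PowerSeries.C q) * f

/-! Put `F n = ₁F₁(n - N; γ + n; -εz)`. The derivative formula
`F n' = (εN - εn)/(γ + n) · F (n + 1)`, the contiguous relation
`z F n' + εz F n = (γ + n - 1) (F (n - 1) - F n)` and Kummer's equation (a consequence of the two)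
show that the Heun operator is tridiagonal on this family:
`L (F n) = R n F (n - 1) + Q n F n + P n F (n + 1)`. Since `R 0 = 0` and, because `α = -εN`,
also `P N = 0`, collecting terms in `L (∑ a n F n)` leaves only the left-hand sides of the
recurrence and of the termination condition. Each `F n` is a polynomial of degree `N - n`, its
upper parameter being a nonpositive integer. -/

lemma poch_succ (a : ℂ) (k : ℕ) : poch a (k + 1) = poch a k * (a + k) :=
  ascPochhammer_succ_eval k a

lemma poch_succ_left (a : ℂ) (k : ℕ) : poch a (k + 1) = a * poch (a + 1) k := by
  simp [poch, ascPochhammer_succ_left, Polynomial.eval_comp]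

lemma poch_ne_zero_s15 {c : ℂ} (hc : ∀ j : ℕ, c + j ≠ 0) (k : ℕ) : poch c k ≠ 0 := by
  rw [poch, Ne, ascPochhammer_eval_eq_zero_iff]
  rintro ⟨j, -, hj⟩
  exact hc j (by rw [hj]; ring)

lemma poch_neg_natCast_of_lt {m k : ℕ} (h : m < k) : poch (-m) k = 0 :=
  ascPochhammer_eval_neg_coe_nat_of_lt h

lemma coeff_F1 (x c s : ℂ) (k : ℕ) :
    coeff k (F1 x c s) = poch x k / poch c k * s ^ k / k.factorial :=
  coeff_mk _ _

lemma coeff_F1_neg_natCast_of_lt (c s : ℂ) {m k : ℕ} (h : m < k) :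
    coeff k (F1 (-m) c s) = 0 := by
  rw [coeff_F1, poch_neg_natCast_of_lt h]
  simp

lemma D_eq_derivative (f : ℂ⟦X⟧) : D f = d⁄dX ℂ f := rfl

lemma D_C_mul (a : ℂ) (f : ℂ⟦X⟧) : D (C a * f) = C a * D f := by
  simp only [D_eq_derivative, ← smul_eq_C_mul]
  exact (d⁄dX ℂ).map_smul a f

noncomputable def Lₗ (α γ δ q ε : ℂ) : ℂ⟦X⟧ →ₗ[ℂ] ℂ⟦X⟧ where
  toFun := L α γ δ q ε
  map_add' f g := by
    simp only [L, D_eq_derivative, map_add]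
    ring
  map_smul' a f := by
    simp only [L, smul_eq_C_mul, RingHom.id_apply, D_C_mul]
    ring

lemma D_F1 (x c s : ℂ) : D (F1 x c s) = C (s * x / c) * F1 (x + 1) (c + 1) s := by
  ext k
  rw [D_eq_derivative, coeff_derivative, coeff_C_mul, coeff_F1, coeff_F1, poch_succ_left,
    poch_succ_left, Nat.factorial_succ, pow_succ]
  have hk : (k : ℂ) + 1 ≠ 0 := Nat.cast_add_one_ne_zero k
  have hfact : (k.factorial : ℂ) ≠ 0 := Nat.cast_ne_zero.mpr k.factorial_ne_zero
  push_cast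
  field_simp

lemma X_mul_D_F1_sub (x c s : ℂ) (hc : ∀ k : ℕ, c + k ≠ 0) :
    X * D (F1 (x + 1) (c + 1) s) - C s * X * F1 (x + 1) (c + 1) s
      = C c * (F1 x c s - F1 (x + 1) (c + 1) s) := by
  ext (_ | k)
  · simp only [mul_assoc, map_sub, coeff_zero_X_mul, coeff_C_mul, coeff_F1]
    simp [poch]
  have hc0 : c ≠ 0 := by simpa using hc 0
  have hc1 : ∀ j : ℕ, c + 1 + j ≠ 0 := fun j h => hc (j + 1) (by push_cast; linear_combination h)
  have hck := hc1 k
  have hpoch := poch_ne_zero_s15 hc1 k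
  have hk : (k : ℂ) + 1 ≠ 0 := Nat.cast_add_one_ne_zero k
  have hfact : (k.factorial : ℂ) ≠ 0 := Nat.cast_ne_zero.mpr k.factorial_ne_zero
  rw [mul_assoc, map_sub, coeff_succ_X_mul, coeff_C_mul, coeff_succ_X_mul, coeff_C_mul, map_sub,
    D_eq_derivative, coeff_derivative, coeff_F1, coeff_F1, coeff_F1, poch_succ_left x,
    poch_succ_left c, poch_succ (x + 1), poch_succ (c + 1), Nat.factorial_succ, pow_succ]
  push_cast
  field_simp
  ring

lemma X_mul_D_D_F1 (x c s : ℂ) (hc : ∀ k : ℕ, c + k ≠ 0) :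
    X * D (D (F1 x c s)) = (C s * X - C c) * D (F1 x c s) + C (s * x) * F1 x c s := by
  have hc0 : c ≠ 0 := by simpa using hc 0
  have hu : C (s * x / c) * C c = C (s * x) := by rw [← map_mul, div_mul_cancel₀ _ hc0]
  rw [D_F1, D_C_mul]
  linear_combination C (s * x / c) * X_mul_D_F1_sub x c s hc + F1 x c s * hu

lemma L_F1_three_term {α γ δ q ε : ℂ} {N : ℕ} (hα : α = -(ε * N)) (hγ : ∀ k : ℕ, γ + k ≠ 0)
    (n : ℕ) :
    L α γ δ q ε (F1 (-(N : ℂ) + n) (γ + n) (-ε))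
      = (-(n : ℂ) * (γ + n - 1)) • F1 (-(N : ℂ) + (n - 1 : ℕ)) (γ + (n - 1 : ℕ)) (-ε)
        + ((n : ℂ) * (γ + n - 1) - q) • F1 (-(N : ℂ) + n) (γ + n) (-ε)
        + (-δ * (α + ε * n) / (γ + n)) • F1 (-(N : ℂ) + (n + 1 : ℕ)) (γ + (n + 1 : ℕ)) (-ε) := by
  have hc : ∀ k : ℕ, γ + n + k ≠ 0 := fun k h => hγ (n + k) (by push_cast; linear_combination h)
  have hODE := X_mul_D_D_F1 (-(N : ℂ) + n) (γ + n) (-ε) hc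
  have hD := D_F1 (-(N : ℂ) + n) (γ + n) (-ε)
  have hP : -δ * (α + ε * n) / (γ + n) = δ * (-ε * (-(N : ℂ) + n) / (γ + n)) := by
    rw [hα]; ring
  rw [hP]
  subst hα
  rcases n with _ | m
  · simp only [smul_eq_C_mul, L, Nat.cast_zero, Nat.zero_sub, zero_add, Nat.cast_one, add_zero]
      at hODE hD ⊢
    simp only [map_sub, map_mul, map_neg, map_natCast, map_zero] at hODE hD ⊢
    linear_combination X * hODE + C δ * hD
  · have hcont := X_mul_D_F1_sub (-(N : ℂ) + m) (γ + m) (-ε)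
      (fun k h => hγ (m + k) (by push_cast; linear_combination h))
    simp only [smul_eq_C_mul, L, Nat.add_sub_cancel, Nat.cast_add, Nat.cast_one, ← add_assoc]
      at hODE hD hcont ⊢
    simp only [map_add, map_sub, map_mul, map_neg, map_natCast, map_one] at hODE hD hcont ⊢
    linear_combination X * hODE + C δ * hD - ((m : ℂ⟦X⟧) + 1) * hcont

lemma sum_smul_three_term {K M : Type*} [CommRing K] [AddCommGroup M] [Module K M]
    (r q p a : ℕ → K) (F : ℕ → M) (hr : r 0 = 0) (N : ℕ)
    (hrec : ∀ n < N, r (n + 1) * a (n + 1) + q n * a n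
      + (if n = 0 then 0 else p (n - 1) * a (n - 1)) = 0) :
    ∑ n ∈ Finset.range (N + 1), a n • (r n • F (n - 1) + q n • F n + p n • F (n + 1))
      = (q N * a N + (if N = 0 then 0 else p (N - 1) * a (N - 1))) • F N
        + (p N * a N) • F (N + 1) := by
  induction N with
  | zero => simp [hr, smul_add, smul_smul, mul_comm]
  | succ N ih =>
    rw [Finset.sum_range_succ, ih fun n hn => hrec n (by omega)]
    simp only [Nat.add_sub_cancel, add_eq_zero, one_ne_zero, and_false, if_false]
    linear_combination (norm := module) hrec N (by omega) • F N

theorem stmt_15_general (α γ δ q ε : ℂ) (hε : ε ≠ 0) (N : ℕ) (hα : α / ε = -(N : ℂ))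
    (hγ : ∀ k : ℕ, γ + k ≠ 0)
    (R Q P : ℕ → ℂ)
    (hR : ∀ n : ℕ, R n = -(n : ℂ) * (γ + n - 1))
    (hQ : ∀ n : ℕ, Q n = (n : ℂ) * (γ + n - 1) - q)
    (hP : ∀ n : ℕ, P n = -δ * (α + ε * n) / (γ + n))
    (a : ℕ → ℂ)
    (hrec1 : 1 ≤ N → R 1 * a 1 + Q 0 * a 0 = 0)
    (hrec : ∀ n : ℕ, 2 ≤ n → n ≤ N →
      R n * a n + Q (n - 1) * a (n - 1) + P (n - 2) * a (n - 2) = 0)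
    (hterm : Q N * a N + (if N = 0 then 0 else P (N - 1) * a (N - 1)) = 0) :
    L α γ δ q ε (∑ n ∈ Finset.range (N + 1),
        PowerSeries.C (a n) * F1 (-(N : ℂ) + n) (γ + n) (-ε)) = 0 ∧
      ∀ k : ℕ, N < k →
        PowerSeries.coeff k (∑ n ∈ Finset.range (N + 1),
          PowerSeries.C (a n) * F1 (-(N : ℂ) + n) (γ + n) (-ε)) = 0 := by
  have hα' : α = -(ε * N) := by rw [← div_mul_cancel₀ α hε, hα]; ring
  set F : ℕ → ℂ⟦X⟧ := fun n => F1 (-(N : ℂ) + n) (γ + n) (-ε)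
  simp only [← smul_eq_C_mul]
  refine ⟨?_, fun k hk => ?_⟩
  · have hLF : ∀ n, Lₗ α γ δ q ε (F n) = R n • F (n - 1) + Q n • F n + P n • F (n + 1) := by
      intro n
      rw [hR, hQ, hP]
      exact L_F1_three_term hα' hγ n
    have hrec' : ∀ n < N, R (n + 1) * a (n + 1) + Q n * a n
        + (if n = 0 then 0 else P (n - 1) * a (n - 1)) = 0 := by
      rintro (_ | m) hm
      · simpa using hrec1 (by omega)
      · simpa using hrec (m + 2) (by omega) (by omega)
    have hPN : P N = 0 := by rw [hP, hα']; ring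
    change Lₗ α γ δ q ε (∑ n ∈ Finset.range (N + 1), a n • F n) = 0
    simp only [map_sum, map_smul, hLF]
    rw [sum_smul_three_term R Q P a F (by simp [hR]) N hrec', hterm, hPN]
    simp
  · rw [map_sum]
    refine Finset.sum_eq_zero fun n hn => ?_
    have hn : n ≤ N := Nat.lt_succ_iff.mp (Finset.mem_range.mp hn)
    rw [coeff_smul, show -(N : ℂ) + n = -((N - n : ℕ) : ℂ) by push_cast [hn]; ring,
      coeff_F1_neg_natCast_of_lt _ _ (by omega), smul_zero]

/-- Two-sided termination: `u = Σ_{n=0}^{N} a_n ₁F₁(−N+n; γ+n; −εz)` is a polynomial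
solution of degree at most `N` of the double-confluent Heun equation. -/
theorem stmt_15 (α γ δ q ε : ℂ) (hε : ε ≠ 0) (N : ℕ) (hα : α / ε = -(N : ℂ))
    (hγ : ∀ k : ℕ, γ + k ≠ 0)
    (R Q P : ℕ → ℂ)
    (hR : ∀ n : ℕ, R n = -(n : ℂ) * (γ + n - 1))
    (hQ : ∀ n : ℕ, Q n = (n : ℂ) * (γ + n - 1) - q)
    (hP : ∀ n : ℕ, P n = -δ * (α + ε * n) / (γ + n))
    (a : ℕ → ℂ) (ha0 : a 0 = 1)
    (hrec1 : 1 ≤ N → R 1 * a 1 + Q 0 * a 0 = 0)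
    (hrec : ∀ n : ℕ, 2 ≤ n → n ≤ N →
      R n * a n + Q (n - 1) * a (n - 1) + P (n - 2) * a (n - 2) = 0)
    (hterm : Q N * a N + (if N = 0 then 0 else P (N - 1) * a (N - 1)) = 0) :
    L α γ δ q ε (∑ n ∈ Finset.range (N + 1),
        PowerSeries.C (a n) * F1 (-(N : ℂ) + n) (γ + n) (-ε)) = 0 ∧
      ∀ k : ℕ, N < k →
        PowerSeries.coeff k (∑ n ∈ Finset.range (N + 1),
          PowerSeries.C (a n) * F1 (-(N : ℂ) + n) (γ + n) (-ε)) = 0 :=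
  stmt_15_general α γ δ q ε hε N hα hγ R Q P hR hQ hP a hrec1 hrec hterm
end
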